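/- arXiv:0705.1287 — 3 statements merged into one kernel-verified Lean document; each statement's English description precedes it below -/
import Mathlib

section
/- For every integer m ≥ 2, the sum ∑_{k=1}^{m-2} k · 2/((k+1)(k+2)) + (m−1)·(2/m) is at most 2·H_m, where H_m = ∑_{k=1}^{m} 1/k is the m-th harmonic number. -/
/-!
The abort probabilities split into partial fractions, `k · 2/((k+1)(k+2)) = 4/(k+2) - 2/(k+1)`,
so the expected cost telescopes to exactly `2 H_m - 2`.
-/

open Finset

theorem expected_cost_eq_two_mul_harmonic_sub_two (n : ℕ) :
    ∑ k ∈ Icc 1 n, (k : ℝ) * (2 / (((k : ℝ) + 1) * ((k : ℝ) + 2)))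
      + ((n : ℝ) + 1) * (2 / ((n : ℝ) + 2))
      = 2 * (harmonic (n + 2) : ℝ) - 2 := by
  induction n with
  | zero => norm_num [harmonic]
  | succ n ih =>
    have increment : ((n : ℝ) + 1) * (2 / (((n : ℝ) + 1 + 1) * ((n : ℝ) + 1 + 2)))
        + ((n : ℝ) + 1 + 1) * (2 / ((n : ℝ) + 1 + 2))
        = ((n : ℝ) + 1) * (2 / ((n : ℝ) + 2)) + 2 * ((n : ℝ) + 2 + 1)⁻¹ := by
      field_simp
      ring
    rw [sum_Icc_succ_top (by omega), harmonic_succ (n + 2)]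
    push_cast at ih ⊢
    linarith

theorem sum_Icc_one_div_eq_harmonic (n : ℕ) :
    ∑ k ∈ Icc 1 n, (1 : ℝ) / k = harmonic n := by
  simp [harmonic_eq_sum_Icc]

/-- Expected number of nodes built in one attempt of the early-abort sampler is at most
twice the harmonic number: for `m ≥ 2`,
`∑_{k=1}^{m-2} k · 2/((k+1)(k+2)) + (m−1)·(2/m) ≤ 2·H_m`. -/
theorem early_abort_expected_cost_le_harmonic (m : ℕ) (hm : 2 ≤ m) :
    (∑ k ∈ Finset.Icc 1 (m - 2), (k : ℝ) * (2 / (((k : ℝ) + 1) * ((k : ℝ) + 2))))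
      + ((m : ℝ) - 1) * (2 / (m : ℝ))
      ≤ 2 * ∑ k ∈ Finset.Icc 1 m, (1 : ℝ) / (k : ℝ) := by
  obtain ⟨n, rfl⟩ := Nat.exists_eq_add_of_le' hm
  have hcost := expected_cost_eq_two_mul_harmonic_sub_two n
  rw [Nat.add_sub_cancel, sum_Icc_one_div_eq_harmonic]
  push_cast at hcost ⊢
  linarith
end

section
/- Let (a_n) be a sequence of nonnegative reals with a_n ~ c·ρ^{−n}·n^{−3/2} as n → ∞ for some constants c > 0, ρ > 0, and suppose the function f(x) = ∑_{n≥0} a_n x^n is bounded above by a constant M on (0, ρ). Setting x_n = (1 − 1/(2n))·ρ and π_n = a_n·x_n^n / f(x_n), there exist c' > 0 and N such that π_n ≥ c'·n^{−3/2} for all n ≥ N. In particular 1/π_n = O(n^{3/2}). -/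
open Filter

/-- If `a_n ~ c·ρ^{−n}·n^{−3/2}` and `f(x) = ∑ a_n x^n ≤ M` on `(0,ρ)`, then with
`x_n = (1 − 1/(2n))·ρ` the probability `π_n = a_n x_n^n / f(x_n)` satisfies
`π_n ≥ c'·n^{−3/2}` for `n` large: `1/π_n = O(n^{3/2})`. -/
theorem exact_size_hitting_probability (a : ℕ → ℝ) (c ρ M : ℝ)
    (hc : 0 < c) (hρ : 0 < ρ)
    (ha0 : ∀ n, 0 ≤ a n)
    (hasym : Tendsto (fun n : ℕ => a n * ρ ^ n * (n : ℝ) ^ ((3 : ℝ) / 2)) atTop (nhds c))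
    (hsum : ∀ x : ℝ, 0 < x → x < ρ → Summable (fun n : ℕ => a n * x ^ n))
    (hbound : ∀ x : ℝ, 0 < x → x < ρ → (∑' n : ℕ, a n * x ^ n) ≤ M) :
    ∃ c' > (0 : ℝ), ∃ N : ℕ, ∀ n ≥ N,
      (a n * ((1 - 1 / (2 * (n : ℝ))) * ρ) ^ n)
          / (∑' k : ℕ, a k * ((1 - 1 / (2 * (n : ℝ))) * ρ) ^ k)
        ≥ c' * (n : ℝ) ^ (-(3 : ℝ) / 2) := by
  -- the factor (1 - 1/(2n))^n tends to exp(-1/2)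
  have hexp : Tendsto (fun n : ℕ => (1 - 1 / (2 * (n : ℝ))) ^ n) atTop
      (nhds (Real.exp (-1 / 2))) := by
    have h := Real.tendsto_one_add_div_pow_exp (-1 / 2)
    convert h using 2 with n
    rw [neg_div, neg_div, div_div]
    ring
  set L : ℝ := c * Real.exp (-1 / 2) with hL
  have hLpos : 0 < L := mul_pos hc (Real.exp_pos _)
  -- the key tendsto for the numerator
  have hmul : Tendsto (fun n : ℕ =>
      a n * ((1 - 1 / (2 * (n : ℝ))) * ρ) ^ n * (n : ℝ) ^ ((3 : ℝ) / 2)) atTop (nhds L) := by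
    have := hasym.mul hexp
    convert this using 2 with n
    rw [mul_pow]
    ring
  -- eventually the numerator times n^{3/2} is at least L/2
  have hev : ∀ᶠ n : ℕ in atTop,
      a n * ((1 - 1 / (2 * (n : ℝ))) * ρ) ^ n * (n : ℝ) ^ ((3 : ℝ) / 2) ≥ L / 2 :=
    hmul.eventually (eventually_ge_nhds (by linarith))
  -- M is positive
  have hM : 0 < M := by
    have hev' : ∀ᶠ n : ℕ in atTop, a n * ρ ^ n * (n : ℝ) ^ ((3 : ℝ) / 2) ≥ c / 2 :=
      hasym.eventually (eventually_ge_nhds (by linarith))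
    obtain ⟨n₀, hn₀⟩ := hev'.exists
    have han₀ : 0 < a n₀ := by
      by_contra h
      push_neg at h
      have h1 : a n₀ = 0 := le_antisymm h (ha0 n₀)
      rw [h1] at hn₀
      simp at hn₀
      linarith
    have hx0 : (0 : ℝ) < ρ / 2 := by linarith
    have hxρ : ρ / 2 < ρ := by linarith
    have hs := hsum (ρ / 2) hx0 hxρ
    have hle : a n₀ * (ρ / 2) ^ n₀ ≤ ∑' k : ℕ, a k * (ρ / 2) ^ k :=
      Summable.le_tsum hs n₀ fun j _ => mul_nonneg (ha0 j) (pow_nonneg hx0.le j)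
    have : 0 < a n₀ * (ρ / 2) ^ n₀ := mul_pos han₀ (pow_pos hx0 n₀)
    linarith [hbound (ρ / 2) hx0 hxρ]
  refine ⟨L / (2 * M), by positivity, ?_⟩
  rw [eventually_atTop] at hev
  obtain ⟨N₁, hN₁⟩ := hev
  refine ⟨max N₁ 1, fun n hn => ?_⟩
  have hn1 : 1 ≤ n := le_trans (le_max_right _ _) hn
  have hnN₁ : N₁ ≤ n := le_trans (le_max_left _ _) hn
  have hn1' : (1 : ℝ) ≤ (n : ℝ) := by exact_mod_cast hn1
  have hnpos : (0 : ℝ) < n := by linarith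
  set t : ℝ := 1 - 1 / (2 * (n : ℝ)) with ht
  have htpos : 0 < t := by
    have : 1 / (2 * (n : ℝ)) ≤ 1 / 2 := by
      apply div_le_div_of_nonneg_left (by norm_num) (by norm_num) (by linarith)
    rw [ht]; linarith
  have htlt : t < 1 := by
    have : 0 < 1 / (2 * (n : ℝ)) := by positivity
    rw [ht]; linarith
  have hx0 : 0 < t * ρ := mul_pos htpos hρ
  have hxρ : t * ρ < ρ := by nlinarith
  have hs := hsum (t * ρ) hx0 hxρ
  have hdenM := hbound (t * ρ) hx0 hxρ
  -- numerator lower bound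
  have hpow : (0 : ℝ) < (n : ℝ) ^ ((3 : ℝ) / 2) := Real.rpow_pos_of_pos hnpos _
  have hnum : a n * (t * ρ) ^ n ≥ L / 2 * (n : ℝ) ^ (-(3 : ℝ) / 2) := by
    have h1 := hN₁ n hnN₁
    have h2 : (n : ℝ) ^ (-(3 : ℝ) / 2) = ((n : ℝ) ^ ((3 : ℝ) / 2))⁻¹ := by
      rw [neg_div, Real.rpow_neg hnpos.le]
    rw [h2, ge_iff_le, mul_inv_le_iff₀ hpow]
    linarith
  have hnumpos : 0 < a n * (t * ρ) ^ n := by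
    have : (0 : ℝ) < L / 2 * (n : ℝ) ^ (-(3 : ℝ) / 2) := by
      have := Real.rpow_pos_of_pos hnpos (-(3 : ℝ) / 2)
      positivity
    linarith
  have hden_pos : 0 < ∑' k : ℕ, a k * (t * ρ) ^ k := by
    have hle : a n * (t * ρ) ^ n ≤ ∑' k : ℕ, a k * (t * ρ) ^ k :=
      Summable.le_tsum hs n fun j _ => mul_nonneg (ha0 j) (pow_nonneg hx0.le j)
    linarith
  calc L / (2 * M) * (n : ℝ) ^ (-(3 : ℝ) / 2)
      = L / 2 * (n : ℝ) ^ (-(3 : ℝ) / 2) / M := by field_simp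
    _ ≤ (a n * (t * ρ) ^ n) / M := by gcongr
    _ ≤ (a n * (t * ρ) ^ n) / (∑' k : ℕ, a k * (t * ρ) ^ k) := by
        gcongr
end

section
/- Let (a_n) be nonnegative reals with a_n ~ c·ρ^{−n}·n^{−3/2} (c > 0, ρ > 0), and f(x) = ∑ a_n x^n bounded by M on (0, ρ). Fix ε ∈ (0,1), set x_n = (1 − 1/(2n))·ρ and π_{n,ε} = (∑_{k=⌈n(1−ε)⌉}^{⌊n(1+ε)⌋} a_k·x_n^k) / f(x_n). Then there exist c' > 0 and N such that π_{n,ε} ≥ c'·ε·n^{−1/2} for all n ≥ N. In particular 1/π_{n,ε} = O(n^{1/2}/ε). -/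
open Filter Finset

/-!
For large `n`, every index `k` of the window `[n(1-ε), n(1+ε)]` lies beyond the point where
`a_k ρ^k ≥ (c/2) k^{-3/2}`, and `k ≤ 2n`. Hence `a_k ρ^k ≥ (c/2)(2n)^{-3/2} ≥ (c/8) n^{-3/2}`,
while Bernoulli's inequality gives `(1 - 1/(2n))^k ≥ ((1 - 1/(2n))^n)^2 ≥ 1/4`; so at the tuned
point `x_n = (1 - 1/(2n))ρ` each term `a_k x_n^k` is at least `(c/32) n^{-3/2}`. The window holds
at least `εn` indices, so the numerator is at least `(c/32) ε n^{-1/2}`, and the denominator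
`f(x_n)` is at most `M`.
-/

theorem one_div_four_le_one_sub_inv_two_mul_pow {n k : ℕ} (hn : 0 < n) (hk : k ≤ 2 * n) :
    1 / 4 ≤ (1 - 1 / (2 * (n : ℝ))) ^ k := by
  have hn' : (1 : ℝ) ≤ n := by exact_mod_cast hn
  have ht : 1 / (2 * (n : ℝ)) ≤ 1 / 2 := by gcongr; linarith
  have ht0 : 0 < 1 / (2 * (n : ℝ)) := by positivity
  have hbernoulli : 1 / 2 ≤ (1 - 1 / (2 * (n : ℝ))) ^ n := by
    have h := one_add_mul_le_pow (show (-2 : ℝ) ≤ -(1 / (2 * n)) by linarith) n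
    rw [← sub_eq_add_neg] at h
    calc (1 : ℝ) / 2 = 1 + n * -(1 / (2 * n)) := by field_simp; ring
      _ ≤ _ := h
  calc (1 : ℝ) / 4 ≤ ((1 - 1 / (2 * (n : ℝ))) ^ n) ^ 2 := by nlinarith
    _ = (1 - 1 / (2 * (n : ℝ))) ^ (2 * n) := by rw [← pow_mul, Nat.mul_comm n 2]
    _ ≤ _ := pow_le_pow_of_le_one (by linarith) (by linarith) hk

theorem tunedPoint_mem_Ioo {ρ : ℝ} (hρ : 0 < ρ) {n : ℕ} (hn : 0 < n) :
    (1 - 1 / (2 * (n : ℝ))) * ρ ∈ Set.Ioo 0 ρ := by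
  have hn' : (1 : ℝ) ≤ n := by exact_mod_cast hn
  have ht : 1 / (2 * (n : ℝ)) ≤ 1 / 2 := by gcongr; linarith
  have ht0 : 0 < 1 / (2 * (n : ℝ)) := by positivity
  constructor <;> nlinarith

theorem card_Icc_ceil_floor_ge {x ε : ℝ} (hx : 0 ≤ x) (hε1 : ε ≤ 1) (hεx : 1 ≤ ε * x) :
    ε * x ≤ #(Icc ⌈x * (1 - ε)⌉₊ ⌊x * (1 + ε)⌋₊) := by
  have hceil : (⌈x * (1 - ε)⌉₊ : ℝ) < x * (1 - ε) + 1 :=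
    Nat.ceil_lt_add_one (mul_nonneg hx (by linarith))
  have hfloor : x * (1 + ε) - 1 < ⌊x * (1 + ε)⌋₊ := Nat.sub_one_lt_floor _
  have hle : ⌈x * (1 - ε)⌉₊ ≤ ⌊x * (1 + ε)⌋₊ + 1 := by
    exact_mod_cast (show (⌈x * (1 - ε)⌉₊ : ℝ) ≤ ⌊x * (1 + ε)⌋₊ + 1 by linarith)
  rw [Nat.card_Icc, Nat.cast_sub hle]
  push_cast
  linarith

section

variable {a : ℕ → ℝ} {c ρ : ℝ}

theorem eventually_half_mul_rpow_le (hc : 0 < c)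
    (hasym : Tendsto (fun n : ℕ => a n * ρ ^ n * (n : ℝ) ^ ((3 : ℝ) / 2)) atTop (nhds c)) :
    ∀ᶠ k : ℕ in atTop, c / 2 * (k : ℝ) ^ (-((3 : ℝ) / 2)) ≤ a k * ρ ^ k := by
  filter_upwards [hasym.eventually (eventually_ge_nhds (half_lt_self hc)),
    eventually_gt_atTop 0] with k hk hk0
  rw [Real.rpow_neg k.cast_nonneg, ← div_eq_mul_inv, div_le_iff₀ (by positivity)]
  exact hk

theorem le_coeff_mul_tunedPoint_pow (hc : 0 ≤ c) {n k : ℕ} (hk0 : 0 < k)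
    (hk : k ≤ 2 * n) (hak : c / 2 * (k : ℝ) ^ (-((3 : ℝ) / 2)) ≤ a k * ρ ^ k) :
    c / 32 * (n : ℝ) ^ (-((3 : ℝ) / 2)) ≤ a k * ((1 - 1 / (2 * (n : ℝ))) * ρ) ^ k := by
  have hn : 0 < n := by omega
  have htwo : (1 : ℝ) / 4 ≤ 2 ^ (-((3 : ℝ) / 2)) := by
    calc (1 : ℝ) / 4 = 2 ^ (-2 : ℝ) := by norm_num [Real.rpow_neg]
      _ ≤ _ := Real.rpow_le_rpow_of_exponent_le (by norm_num) (by norm_num)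
  have hcoeff : c / 8 * (n : ℝ) ^ (-((3 : ℝ) / 2)) ≤ a k * ρ ^ k :=
    calc c / 8 * (n : ℝ) ^ (-((3 : ℝ) / 2))
        ≤ c / 2 * (2 ^ (-((3 : ℝ) / 2)) * (n : ℝ) ^ (-((3 : ℝ) / 2))) := by
          have := Real.rpow_pos_of_pos (show (0 : ℝ) < n by positivity) (-((3 : ℝ) / 2))
          nlinarith [mul_nonneg (mul_nonneg hc this.le) (sub_nonneg.2 htwo)]
      _ = c / 2 * (2 * (n : ℝ)) ^ (-((3 : ℝ) / 2)) := by
          rw [Real.mul_rpow (by norm_num) n.cast_nonneg]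
      _ ≤ c / 2 * (k : ℝ) ^ (-((3 : ℝ) / 2)) := by
          refine mul_le_mul_of_nonneg_left ?_ (by positivity)
          exact Real.rpow_le_rpow_of_nonpos (by positivity) (by exact_mod_cast hk) (by norm_num)
      _ ≤ a k * ρ ^ k := hak
  calc c / 32 * (n : ℝ) ^ (-((3 : ℝ) / 2))
      = c / 8 * (n : ℝ) ^ (-((3 : ℝ) / 2)) * (1 / 4) := by ring
    _ ≤ a k * ρ ^ k * (1 - 1 / (2 * (n : ℝ))) ^ k :=
      mul_le_mul hcoeff (one_div_four_le_one_sub_inv_two_mul_pow hn hk) (by norm_num)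
        (hcoeff.trans' (by positivity))
    _ = a k * ((1 - 1 / (2 * (n : ℝ))) * ρ) ^ k := by rw [mul_pow]; ring

theorem eventually_window_sum_ge (hc : 0 < c)
    (hasym : Tendsto (fun n : ℕ => a n * ρ ^ n * (n : ℝ) ^ ((3 : ℝ) / 2)) atTop (nhds c))
    {ε : ℝ} (hε0 : 0 < ε) (hε1 : ε < 1) :
    ∀ᶠ n : ℕ in atTop, c / 32 * ε * (n : ℝ) ^ (-(1 : ℝ) / 2) ≤
      ∑ k ∈ Icc ⌈(n : ℝ) * (1 - ε)⌉₊ ⌊(n : ℝ) * (1 + ε)⌋₊,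
        a k * ((1 - 1 / (2 * (n : ℝ))) * ρ) ^ k := by
  obtain ⟨K, hK⟩ := eventually_atTop.mp (eventually_half_mul_rpow_le hc hasym)
  filter_upwards [tendsto_natCast_atTop_atTop.eventually_ge_atTop (1 / ε),
    tendsto_natCast_atTop_atTop.eventually_ge_atTop (K / (1 - ε))] with n hεn hKn
  rw [div_le_iff₀ hε0, mul_comm] at hεn
  rw [div_le_iff₀ (by linarith)] at hKn
  have hn : (0 : ℝ) < n := by nlinarith
  have hterm : ∀ k ∈ Icc ⌈(n : ℝ) * (1 - ε)⌉₊ ⌊(n : ℝ) * (1 + ε)⌋₊,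
      c / 32 * (n : ℝ) ^ (-((3 : ℝ) / 2)) ≤ a k * ((1 - 1 / (2 * (n : ℝ))) * ρ) ^ k := by
    intro k hk
    rw [mem_Icc, Nat.ceil_le, Nat.le_floor_iff (by positivity)] at hk
    have hk0 : 0 < k := by exact_mod_cast (show (0 : ℝ) < k by nlinarith)
    have hk2n : k ≤ 2 * n := by exact_mod_cast (show (k : ℝ) ≤ 2 * n by nlinarith)
    exact le_coeff_mul_tunedPoint_pow hc.le hk0 hk2n (hK k (by exact_mod_cast (hKn.trans hk.1 : (K : ℝ) ≤ k)))
  have hcard := card_Icc_ceil_floor_ge hn.le hε1.le hεn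
  calc c / 32 * ε * (n : ℝ) ^ (-(1 : ℝ) / 2)
      = ε * n * (c / 32 * (n : ℝ) ^ (-((3 : ℝ) / 2))) := by
        rw [show -(1 : ℝ) / 2 = 1 + -((3 : ℝ) / 2) by norm_num, Real.rpow_add hn,
          Real.rpow_one]
        ring
    _ ≤ #(Icc ⌈(n : ℝ) * (1 - ε)⌉₊ ⌊(n : ℝ) * (1 + ε)⌋₊) *
        (c / 32 * (n : ℝ) ^ (-((3 : ℝ) / 2))) := by gcongr
    _ ≤ _ := by simpa only [nsmul_eq_mul] using card_nsmul_le_sum _ _ _ hterm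

theorem pos_and_div_le_sum_div_tsum {M : ℝ} (ha0 : ∀ n, 0 ≤ a n)
    (hsum : ∀ x : ℝ, 0 < x → x < ρ → Summable (fun n : ℕ => a n * x ^ n))
    (hbound : ∀ x : ℝ, 0 < x → x < ρ → (∑' n : ℕ, a n * x ^ n) ≤ M)
    {x : ℝ} (hx : x ∈ Set.Ioo 0 ρ) {s : Finset ℕ} {b : ℝ} (hb0 : 0 < b)
    (hb : b ≤ ∑ k ∈ s, a k * x ^ k) :
    0 < M ∧ b / M ≤ (∑ k ∈ s, a k * x ^ k) / ∑' k : ℕ, a k * x ^ k := by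
  have hle_tsum : ∑ k ∈ s, a k * x ^ k ≤ ∑' k : ℕ, a k * x ^ k :=
    (hsum x hx.1 hx.2).sum_le_tsum s fun k _ => mul_nonneg (ha0 k) (pow_nonneg hx.1.le k)
  have htsum_pos := hb0.trans_le (hb.trans hle_tsum)
  exact ⟨htsum_pos.trans_le (hbound x hx.1 hx.2),
    div_le_div₀ (hb0.le.trans hb) hb htsum_pos (hbound x hx.1 hx.2)⟩

end

/-- If `a_n ~ c·ρ^{−n}·n^{−3/2}` and `f(x) = ∑ a_n x^n ≤ M` on `(0,ρ)`, then for fixed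
`ε ∈ (0,1)` and `x_n = (1 − 1/(2n))·ρ`, the window probability
`π_{n,ε} = (∑_{k=⌈n(1−ε)⌉}^{⌊n(1+ε)⌋} a_k x_n^k)/f(x_n)` satisfies
`π_{n,ε} ≥ c'·ε·n^{−1/2}` for `n` large: `1/π_{n,ε} = O(n^{1/2}/ε)`. -/
theorem approximate_size_hitting_probability (a : ℕ → ℝ) (c ρ M ε : ℝ)
    (hc : 0 < c) (hρ : 0 < ρ) (hε0 : 0 < ε) (hε1 : ε < 1)
    (ha0 : ∀ n, 0 ≤ a n)
    (hasym : Tendsto (fun n : ℕ => a n * ρ ^ n * (n : ℝ) ^ ((3 : ℝ) / 2)) atTop (nhds c))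
    (hsum : ∀ x : ℝ, 0 < x → x < ρ → Summable (fun n : ℕ => a n * x ^ n))
    (hbound : ∀ x : ℝ, 0 < x → x < ρ → (∑' n : ℕ, a n * x ^ n) ≤ M) :
    ∃ c' > (0 : ℝ), ∃ N : ℕ, ∀ n ≥ N,
      (∑ k ∈ Finset.Icc ⌈(n : ℝ) * (1 - ε)⌉₊ ⌊(n : ℝ) * (1 + ε)⌋₊,
          a k * ((1 - 1 / (2 * (n : ℝ))) * ρ) ^ k)
          / (∑' k : ℕ, a k * ((1 - 1 / (2 * (n : ℝ))) * ρ) ^ k)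
        ≥ c' * ε * (n : ℝ) ^ (-(1 : ℝ) / 2) := by
  obtain ⟨N, hN⟩ := eventually_atTop.mp
    ((eventually_window_sum_ge hc hasym hε0 hε1).and (eventually_gt_atTop 0))
  have hb0 (n : ℕ) (hn : n ≥ N) : 0 < c / 32 * ε * (n : ℝ) ^ (-(1 : ℝ) / 2) := by
    have := Real.rpow_pos_of_pos (Nat.cast_pos.2 (hN n hn).2) (-(1 : ℝ) / 2)
    positivity
  have hratio (n : ℕ) (hn : n ≥ N) := pos_and_div_le_sum_div_tsum ha0 hsum hbound
    (tunedPoint_mem_Ioo hρ (hN n hn).2) (hb0 n hn) (hN n hn).1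
  have hM : 0 < M := (hratio N le_rfl).1
  refine ⟨c / (32 * M), by positivity, N, fun n hn => ?_⟩
  calc c / (32 * M) * ε * (n : ℝ) ^ (-(1 : ℝ) / 2)
      = c / 32 * ε * (n : ℝ) ^ (-(1 : ℝ) / 2) / M := by ring
    _ ≤ _ := (hratio n hn).2
end
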